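/- Let G be a finite group and p a prime. Then O_p(G) is contained in Z*(G) if and only if O_p(G/Z*(G)) is the trivial subgroup. -/

import Mathlib

/-- The hypercenter `Z*(G)` of a group: the union (supremum) of the upper central series. -/
def hypercenter (G : Type*) [Group G] : Subgroup G :=
  ⨆ n : ℕ, upperCentralSeries G n

instance hypercenter_normal (G : Type*) [Group G] : (hypercenter G).Normal := by
  constructor
  intro x hx g
  have hdir : Directed (· ≤ ·) (fun n : ℕ => upperCentralSeries G n) :=
    (upperCentralSeries_mono G).directed_le
  rw [hypercenter, Subgroup.mem_iSup_of_directed hdir] at hx ⊢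
  obtain ⟨n, hn⟩ := hx
  exact ⟨n, (inferInstance : (Subgroup.upperCentralSeries G n).Normal).conj_mem x hn g⟩

/-- The `p`-core `O_p(G)`: the largest normal `p`-subgroup of `G`, i.e. the supremum of all
normal `p`-subgroups. -/
def pCore (p : ℕ) (G : Type*) [Group G] : Subgroup G :=
  ⨆ (H : Subgroup G) (_ : H.Normal ∧ IsPGroup p H), H

/-!
Every normal `p`-subgroup of `G` maps to a normal `p`-subgroup of `G/Z*(G)`, which gives one
direction. Conversely, let `K` be a normal `p`-subgroup of `G/Z*(G)` with preimage `N`. As `G` is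
finite, `Z*(G) = Z_c(G)` for some `c`, and `Z_c(G) ∩ N ≤ Z_c(N)`; so `N` is an extension of the
nilpotent group `K` by a subgroup of `Z_c(N)`, hence nilpotent. Its Sylow `p`-subgroup `P` is
then characteristic in `N`, hence normal in `G`, so `P ≤ O_p(G) ≤ Z*(G)`. But `P` maps onto a
Sylow `p`-subgroup of the `p`-group `K`, that is onto `K`, so `K = 1`.
-/

section PCore

variable {p : ℕ} {G H : Type*} [Group G] [Group H]

lemma le_pCore {N : Subgroup G} (hN : N.Normal) (hNp : IsPGroup p N) : N ≤ pCore p G :=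
  le_iSup₂ (f := fun (N : Subgroup G) (_ : N.Normal ∧ IsPGroup p N) => N) N ⟨hN, hNp⟩

lemma pCore_le {K : Subgroup G} (h : ∀ N : Subgroup G, N.Normal → IsPGroup p N → N ≤ K) :
    pCore p G ≤ K :=
  iSup₂_le fun N hN => h N hN.1 hN.2

lemma map_pCore_le {f : G →* H} (hf : Function.Surjective f) :
    (pCore p G).map f ≤ pCore p H :=
  Subgroup.map_le_iff_le_comap.mpr <| pCore_le fun _ hN hNp =>
    Subgroup.map_le_iff_le_comap.mp <| le_pCore (hN.map f hf) (hNp.map f)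

end PCore

lemma Sylow.coe_eq_top_of_isPGroup {p : ℕ} {G : Type*} [Group G] (hG : IsPGroup p G)
    (P : Sylow p G) : (P : Subgroup G) = ⊤ :=
  (P.is_maximal' (hG.to_subgroup ⊤) le_top).symm

namespace Subgroup

variable {G Q : Type*} [Group G] [Group Q]

lemma upperCentralSeries_subgroupOf_le (H : Subgroup G) (n : ℕ) :
    (upperCentralSeries G n).subgroupOf H ≤ upperCentralSeries H n := by
  induction n with
  | zero => exact (bot_subgroupOf H).le
  | succ n ih =>
    intro x hx
    rw [mem_subgroupOf, mem_upperCentralSeries_succ_iff] at hx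
    exact mem_upperCentralSeries_succ_iff.mpr fun y => ih (mem_subgroupOf.mpr (hx y))

lemma comap_upperCentralSeries_le_of_ker_le {f : G →* Q} {n : ℕ}
    (hf : f.ker ≤ upperCentralSeries G n) (k : ℕ) :
    (upperCentralSeries Q k).comap f ≤ upperCentralSeries G (n + k) := by
  induction k with
  | zero => exact hf
  | succ k ih =>
    intro x hx
    rw [mem_comap, mem_upperCentralSeries_succ_iff] at hx
    exact mem_upperCentralSeries_succ_iff.mpr fun y => ih (by rw [mem_comap, map_commutatorElement]; exact hx (f y))

lemma isNilpotent_of_ker_le_upperCentralSeries [Group.IsNilpotent Q] (f : G →* Q) {n : ℕ}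
    (hf : f.ker ≤ upperCentralSeries G n) : Group.IsNilpotent G := by
  obtain ⟨k, hk⟩ := Group.IsNilpotent.nilpotent Q
  have := comap_upperCentralSeries_le_of_ker_le hf k
  rw [hk, comap_top, top_le_iff] at this
  exact ⟨n + k, this⟩

end Subgroup

lemma exists_hypercenter_eq_upperCentralSeries (G : Type*) [Group G]
    [WellFoundedGT (Subgroup G)] :
    ∃ n, hypercenter G = Subgroup.upperCentralSeries G n :=
  ⟨_, WellFoundedGT.iSup_eq_monotonicSequenceLimit ⟨_, Subgroup.upperCentralSeries_mono G⟩⟩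

lemma Sylow.map_subtype_le_pCore {p : ℕ} [Fact p.Prime] {G : Type*} [Group G] {N : Subgroup G}
    [N.Normal] [Finite (Sylow p N)] (P : Sylow p N) [P.Normal] :
    (P : Subgroup N).map N.subtype ≤ pCore p G :=
  have := P.characteristic_of_normal ‹_›
  le_pCore inferInstance (P.isPGroup'.map N.subtype)

lemma isNilpotent_of_ker_le_hypercenter {G Q : Type*} [Group G] [Group Q]
    [WellFoundedGT (Subgroup G)] [Group.IsNilpotent Q] {H : Subgroup G} (f : H →* Q)
    (hf : f.ker ≤ (hypercenter G).subgroupOf H) : Group.IsNilpotent H := by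
  obtain ⟨n, hn⟩ := exists_hypercenter_eq_upperCentralSeries G
  exact Subgroup.isNilpotent_of_ker_le_upperCentralSeries f
    (hf.trans (hn ▸ Subgroup.upperCentralSeries_subgroupOf_le H n))

lemma eq_bot_of_isPGroup_of_pCore_le_hypercenter {p : ℕ} [Fact p.Prime] {G : Type*} [Group G]
    [Finite G] (hle : pCore p G ≤ hypercenter G) {K : Subgroup (G ⧸ hypercenter G)}
    (hK : K.Normal) (hKp : IsPGroup p K) : K = ⊥ := by
  set Z := hypercenter G
  let N := K.comap (QuotientGroup.mk' Z)
  let f : N →* K := ((QuotientGroup.mk' Z).comp N.subtype).codRestrict K fun x => x.2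
  have hf : Function.Surjective f := by
    rintro ⟨y, hy⟩
    obtain ⟨x, rfl⟩ := QuotientGroup.mk'_surjective Z y
    exact ⟨⟨x, hy⟩, rfl⟩
  have hker : f.ker = Z.subgroupOf N := by
    refine (MonoidHom.ker_codRestrict _ _ _).trans ?_
    rw [← MonoidHom.comap_ker, QuotientGroup.ker_mk']
    rfl
  have := hKp.isNilpotent
  have := isNilpotent_of_ker_le_hypercenter f hker.le
  let P : Sylow p N := default
  have hPker : (P : Subgroup N) ≤ f.ker :=
    hker ▸ Subgroup.map_le_iff_le_comap.mp (P.map_subtype_le_pCore.trans hle)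
  have htop : (⊤ : Subgroup K) = ⊥ := by
    rw [← (P.mapSurjective hf).coe_eq_top_of_isPGroup hKp, Sylow.coe_mapSurjective,
      Subgroup.map_eq_bot_iff]
    exact hPker
  have := Subgroup.subsingleton_iff.mp (subsingleton_of_bot_eq_top htop.symm)
  exact K.eq_bot_of_subsingleton

/-- Let `G` be a finite group and `p` a prime. Then `O_p(G) ≤ Z*(G)` if and
only if `O_p(G/Z*(G))` is trivial. -/
theorem pCore_le_hypercenter_iff
    {G : Type*} [Group G] [Finite G] (p : ℕ) (hp : p.Prime) :
    pCore p G ≤ hypercenter G ↔ pCore p (G ⧸ hypercenter G) = ⊥ := by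
  have : Fact p.Prime := ⟨hp⟩
  constructor
  · intro hle
    exact eq_bot_iff.mpr <| pCore_le fun K hK hKp =>
      (eq_bot_of_isPGroup_of_pCore_le_hypercenter hle hK hKp).le
  · intro hbot
    rw [← QuotientGroup.ker_mk' (hypercenter G), ← Subgroup.map_eq_bot_iff, eq_bot_iff, ← hbot]
    exact map_pCore_le (QuotientGroup.mk'_surjective _)
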